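/- Let V be a Poisson algebra over a field F. If (f,F,d) and (f',F',d') belong to [V], then the triple (f∘d' − d'∘f, F∘d' − d'∘F, d∘d' − d'∘d) also belongs to [V]: (f∘d' − d'∘f, F∘d' − d'∘F) is a bimultiplier of (V,·), d∘d' − d'∘d is a derivation of the Lie algebra (V,[-,-]), and conditions (V1), (V2), (V3) hold for this triple. -/
import Mathlib


/-- Membership in `[V]` for a Poisson algebra `(V, m, b)`: `(f, F, d)` is such
that `(f, F)` is a bimultiplier of `(V, ·)`, `d` is a derivation of the Lie
algebra `(V, [-,-])`, and conditions (V1), (V2), (V3) hold. -/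
def MemBrV {K V : Type*} [Field K] [AddCommGroup V] [Module K V]
    (m b : V →ₗ[K] V →ₗ[K] V) (f F d : V →ₗ[K] V) : Prop :=
  (∀ x y : V, f (m x y) = m (f x) y) ∧
  (∀ x y : V, F (m x y) = m x (F y)) ∧
  (∀ x y : V, m x (f y) = m (F x) y) ∧
  (∀ x y : V, d (b x y) = b (d x) y + b x (d y)) ∧
  (∀ x y : V, f (b x y) = b (f x) y - m (d y) x) ∧
  (∀ x y : V, F (b x y) = b (F x) y - m x (d y)) ∧
  (∀ x y : V, d (m x y) = m (d x) y + m x (d y))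

/-- If `(f,F,d)` and `(f',F',d')` belong to `[V]` for a Poisson
algebra `V`, then so does `(f∘d' − d'∘f, F∘d' − d'∘F, d∘d' − d'∘d)`. -/
theorem brV_closed_under_bracket
    (K V : Type*) [Field K] [AddCommGroup V] [Module K V]
    (m b : V →ₗ[K] V →ₗ[K] V)
    (hassoc : ∀ x y z : V, m (m x y) z = m x (m y z))
    (halt : ∀ x : V, b x x = 0)
    (hjac : ∀ x y z : V, b (b x y) z + b (b y z) x + b (b z x) y = 0)
    (hpois : ∀ x y z : V, b x (m y z) = m (b x y) z + m y (b x z))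
    (f F d f' F' d' : V →ₗ[K] V)
    (h1 : MemBrV m b f F d) (h2 : MemBrV m b f' F' d') :
    MemBrV m b (f ∘ₗ d' - d' ∘ₗ f) (F ∘ₗ d' - d' ∘ₗ F) (d ∘ₗ d' - d' ∘ₗ d) := by
  obtain ⟨hf, hF, hfF, hd, hV1, hV2, hV3⟩ := h1
  obtain ⟨hf', hF', hfF', hd', hV1', hV2', hV3'⟩ := h2
  refine ⟨?_, ?_, ?_, ?_, ?_, ?_, ?_⟩
  case refine_3 =>
    intro x y
    have key : m x (d' (f y)) = m (d' (F x)) y + m (F x) (d' y) - m (F (d' x)) y := by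
      have h := hV3' x (f y)
      rw [hfF, show m (d' x) (f y) = m (F (d' x)) y from hfF (d' x) y, hV3'] at h
      exact eq_sub_of_add_eq (by rw [add_comm]; exact h.symm)
    simp only [LinearMap.sub_apply, LinearMap.comp_apply, map_sub, key, hfF]
    abel
  all_goals (intro x y
             simp only [LinearMap.sub_apply, LinearMap.comp_apply, hV3', hV3, hd, hd',
               hf, hF, hV1, hV2, map_add, map_sub, LinearMap.add_apply]
             try simp only [hf, hF, hfF, hfF', hd, hd', hV1, hV2, hV3, map_add, map_sub,
               LinearMap.add_apply, LinearMap.sub_apply]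
             abel)
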